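/- arXiv:0709.1282 — 3 statements merged into one kernel-verified Lean document; each statement's English description precedes it below -/
import Mathlib

section
/- Let n, k be positive integers with k ≤ n, and let L be a real 2n×2k matrix satisfying Lᵀ J_{2n} L = J_{2k} (i.e., the columns of L form k symplectic pairs, so L is the Jacobian of a symplectic parameterization). Then the Gram determinant satisfies det(Lᵀ L) ≥ 1. Consequently the 2k-dimensional volume of the parallelepiped spanned by the columns of L is at least 1, the volume of the standard parameterizing cube (linear/differential version of the Volume Expansion of Parasymplectic 2k-Volumes Theorem). -/
/-!
Because `J_{2n}` is orthogonal, `A = J_{2n}ᵀ L` has the same Gram matrix as `L`, while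
`Aᵀ L = J_{2k}` has determinant `1`. The Cauchy–Schwarz inequality for Gram determinants,
`det (Aᵀ L)² ≤ det (Aᵀ A) det (Lᵀ L)`, obtained from the Cauchy–Binet expansion of both sides into
maximal minors, therefore gives `1 ≤ det (Lᵀ L)²`, and `det (Lᵀ L) ≥ 0` since `Lᵀ L` is positive
semidefinite.
-/

open Matrix

/-- The standard symplectic matrix `J` on `ℝ^{2m}`, with coordinates ordered in
symplectic pairs `(p₁,q₁,…,p_m,q_m)`: block-diagonal with `m` copies of
`[[0,-1],[1,0]]` down the diagonal. -/
def symplJ (m : ℕ) : Matrix (Fin (2 * m)) (Fin (2 * m)) ℝ :=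
  Matrix.of fun i j =>
    if i.val + 1 = j.val ∧ i.val % 2 = 0 then (-1 : ℝ)
    else if j.val + 1 = i.val ∧ j.val % 2 = 0 then 1 else 0

section CauchyBinet

open Finset Equiv

variable {m n R : Type*} [Fintype m] [Fintype n] [DecidableEq m] [CommRing R]

theorem det_transpose_mul_eq_sum_prod_mul_det_submatrix (A B : Matrix n m R) :
    det (Aᵀ * B) = ∑ f : m → n, (∏ i, B (f i) i) * det (A.submatrix f id) := by
  have hexpand : det (Aᵀ * B)
      = ∑ f : m → n, ∑ σ : Perm m, (Perm.sign σ : R) * ∏ i, A (f i) (σ i) * B (f i) i := by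
    simp only [det_apply', mul_apply, transpose_apply, prod_univ_sum, mul_sum,
      Fintype.piFinset_univ]
    rw [sum_comm]
  rw [hexpand]
  refine sum_congr rfl fun f _ => ?_
  rw [← det_transpose, det_apply', mul_sum]
  refine sum_congr rfl fun σ _ => ?_
  simp only [transpose_apply, submatrix_apply, id_eq, prod_mul_distrib]
  ring

-- Only injective `f` contribute, and each set of rows occurs once per ordering.
theorem sum_det_submatrix_mul_det_submatrix (A B : Matrix n m R) :
    ∑ f : m → n, det (A.submatrix f id) * det (B.submatrix f id)
      = (Fintype.card m).factorial * det (Aᵀ * B) := by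
  have hcol (σ : Perm m) : (Perm.sign σ : R) * det (Aᵀ * B.submatrix id σ) = det (Aᵀ * B) := by
    rw [← submatrix_id_id Aᵀ, ← submatrix_mul _ _ _ _ _ Function.bijective_id,
      submatrix_id_id, det_permute', ← mul_assoc, ← Int.cast_mul, ← Units.val_mul,
      Int.units_mul_self, Units.val_one, Int.cast_one, one_mul]
  calc ∑ f : m → n, det (A.submatrix f id) * det (B.submatrix f id)
      = ∑ f : m → n, ∑ σ : Perm m,
          (Perm.sign σ : R) * ((∏ i, B (f i) (σ i)) * det (A.submatrix f id)) := by
        refine sum_congr rfl fun f _ => ?_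
        rw [mul_comm, ← det_transpose (B.submatrix f id), det_apply', sum_mul]
        simp only [transpose_apply, submatrix_apply, id_eq, mul_assoc]
    _ = ∑ σ : Perm m, (Perm.sign σ : R) *
          ∑ f : m → n, (∏ i, B (f i) (σ i)) * det (A.submatrix f id) := by
        simp only [mul_sum]
        exact sum_comm
    _ = ∑ σ : Perm m, det (Aᵀ * B) := by
        refine sum_congr rfl fun σ _ => ?_
        rw [← hcol σ, det_transpose_mul_eq_sum_prod_mul_det_submatrix]
        rfl
    _ = _ := by simp [Fintype.card_perm]

theorem det_transpose_mul_sq_le (A B : Matrix n m ℝ) :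
    det (Aᵀ * B) ^ 2 ≤ det (Aᵀ * A) * det (Bᵀ * B) := by
  have hN : (0 : ℝ) < (Fintype.card m).factorial := by positivity
  have h := sum_mul_sq_le_sq_mul_sq univ (fun f : m → n => det (A.submatrix f id))
    (fun f => det (B.submatrix f id))
  simp only [sq (det _), sum_det_submatrix_mul_det_submatrix] at h
  exact le_of_mul_le_mul_left (by linear_combination h) (pow_pos hN 2)

theorem det_transpose_mul_mul_sq_le [DecidableEq n] {Ω : Matrix n n ℝ} (hΩ : Ω * Ωᵀ = 1)
    (L : Matrix n m ℝ) : det (Lᵀ * Ω * L) ^ 2 ≤ det (Lᵀ * L) ^ 2 := by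
  have h := det_transpose_mul_sq_le (Ωᵀ * L) L
  have hcross : (Ωᵀ * L)ᵀ * L = Lᵀ * Ω * L := by rw [transpose_mul, transpose_transpose]
  have hgram : (Ωᵀ * L)ᵀ * (Ωᵀ * L) = Lᵀ * L := by
    rw [transpose_mul, transpose_transpose, Matrix.mul_assoc,
      ← Matrix.mul_assoc Ω, hΩ, Matrix.one_mul]
  rwa [hcross, hgram, ← sq] at h

end CauchyBinet

-- `i ↦ (i % 2, i / 2)`: the position inside a symplectic pair, and the index of the pair.
def finTwoMulEquiv (m : ℕ) : Fin (2 * m) ≃ Fin 2 × Fin m :=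
  (finCongr (Nat.mul_comm 2 m)).trans (finProdFinEquiv.symm.trans (Equiv.prodComm _ _))

theorem finTwoMulEquiv_symm_apply_val (m : ℕ) (p : Fin 2 × Fin m) :
    ((finTwoMulEquiv m).symm p : ℕ) = p.1 + 2 * p.2 := by
  simp [finTwoMulEquiv]

theorem symplJ_eq_submatrix_blockDiagonal (m : ℕ) :
    symplJ m = (blockDiagonal fun _ : Fin m => !![0, -1; 1, 0]).submatrix
      (finTwoMulEquiv m) (finTwoMulEquiv m) := by
  ext i j
  obtain ⟨⟨b, a⟩, rfl⟩ := (finTwoMulEquiv m).symm.surjective i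
  obtain ⟨⟨d, c⟩, rfl⟩ := (finTwoMulEquiv m).symm.surjective j
  simp only [submatrix_apply, Equiv.apply_symm_apply, blockDiagonal_apply, symplJ, of_apply,
    finTwoMulEquiv_symm_apply_val, Fin.ext_iff]
  fin_cases b <;> fin_cases d <;> simp <;> split_ifs <;> first | rfl | omega

theorem symplJ_mul_transpose_self (m : ℕ) : symplJ m * (symplJ m)ᵀ = 1 := by
  have hJ₂ : !![(0 : ℝ), -1; 1, 0] * !![0, -1; 1, 0]ᵀ = 1 := by
    ext i j; fin_cases i <;> fin_cases j <;> simp [mul_apply]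
  rw [symplJ_eq_submatrix_blockDiagonal, transpose_submatrix, blockDiagonal_transpose,
    submatrix_mul_equiv, ← blockDiagonal_mul]
  simp only [hJ₂]
  rw [← Pi.one_def, blockDiagonal_one, submatrix_one_equiv]

theorem det_symplJ (m : ℕ) : (symplJ m).det = 1 := by
  simp [symplJ_eq_submatrix_blockDiagonal, det_blockDiagonal]

theorem gram_det_ge_one_of_symplectic_columns_general
    (n k : ℕ)
    (L : Matrix (Fin (2 * n)) (Fin (2 * k)) ℝ)
    (hL : Lᵀ * symplJ n * L = symplJ k) :
    1 ≤ (Lᵀ * L).det ∧ 1 ≤ Real.sqrt (Lᵀ * L).det := by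
  have hsq : 1 ≤ (Lᵀ * L).det ^ 2 := by
    simpa [hL, det_symplJ] using det_transpose_mul_mul_sq_le (symplJ_mul_transpose_self n) L
  have hnonneg : 0 ≤ (Lᵀ * L).det := by
    simpa using (posSemidef_conjTranspose_mul_self L).det_nonneg
  have hdet : 1 ≤ (Lᵀ * L).det := (one_le_sq_iff₀ hnonneg).mp hsq
  exact ⟨hdet, Real.one_le_sqrt.mpr hdet⟩

/-- **Volume expansion of parasymplectic 2k-volumes (linear version).**
If the columns of a real `2n × 2k` matrix `L` form `k` symplectic pairs
(`Lᵀ J_{2n} L = J_{2k}`), then the Gram determinant `det(Lᵀ L)` is at least `1`;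
consequently the `2k`-volume `√det(LᵀL)` of the parallelepiped spanned by the
columns of `L` is at least `1`. -/
theorem gram_det_ge_one_of_symplectic_columns
    (n k : ℕ) (hk : 0 < k) (hkn : k ≤ n)
    (L : Matrix (Fin (2 * n)) (Fin (2 * k)) ℝ)
    (hL : Lᵀ * symplJ n * L = symplJ k) :
    1 ≤ (Lᵀ * L).det ∧ 1 ≤ Real.sqrt (Lᵀ * L).det :=
  gram_det_ge_one_of_symplectic_columns_general n k L hL
end

section
/- (Wirtinger's inequality, case k = 1.) For all vectors x, y ∈ ℝ^{2n}, the symplectic area |ω(x,y)| = |xᵀ J_{2n} y| is bounded by the Euclidean area of the parallelogram spanned by x and y: (xᵀ J_{2n} y)² ≤ ‖x‖²‖y‖² − ⟨x,y⟩². -/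
/-! Since `J` is skew-symmetric and orthogonal, `x` and `J x` are orthogonal vectors of the same
length, and `⟪x, J y⟫ = -⟪J x, y⟫`. Bessel's inequality for the pair `x, J x` then gives
`⟪x, y⟫² + ⟪J x, y⟫² ≤ ‖x‖² ‖y‖²`, which is the claim. -/

open Matrix

section DotProduct

variable {ι : Type*} [Fintype ι]

theorem mulVec_dotProduct_mulVec_self [DecidableEq ι] {R : Type*} [CommSemiring R]
    {J : Matrix ι ι R} (hJ : Jᵀ * J = 1) (x y : ι → R) :
    J *ᵥ x ⬝ᵥ J *ᵥ y = x ⬝ᵥ y := by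
  rw [dotProduct_mulVec, ← mulVec_transpose, mulVec_mulVec, hJ, one_mulVec]

variable {R : Type*} [CommRing R] [LinearOrder R] [IsStrictOrderedRing R]

theorem sq_dotProduct_le_dotProduct_self_mul_dotProduct_self (x y : ι → R) :
    (x ⬝ᵥ y) ^ 2 ≤ (x ⬝ᵥ x) * (y ⬝ᵥ y) := by
  simpa only [dotProduct, sq] using Finset.sum_mul_sq_le_sq_mul_sq Finset.univ x y

/-- Cauchy–Schwarz applied to `y` and its unnormalised projection `⟪x,y⟫ x + ⟪v,y⟫ v`. -/
theorem sq_dotProduct_add_sq_dotProduct_le {x v : ι → R} (hxv : x ⬝ᵥ v = 0)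
    (hvv : v ⬝ᵥ v = x ⬝ᵥ x) (y : ι → R) :
    (x ⬝ᵥ y) ^ 2 + (v ⬝ᵥ y) ^ 2 ≤ (x ⬝ᵥ x) * (y ⬝ᵥ y) := by
  set a := x ⬝ᵥ y
  set b := v ⬝ᵥ y
  set u := a • x + b • v
  have huy : u ⬝ᵥ y = a ^ 2 + b ^ 2 := by
    simp only [u, add_dotProduct, smul_dotProduct, smul_eq_mul]; ring
  have huu : u ⬝ᵥ u = (a ^ 2 + b ^ 2) * (x ⬝ᵥ x) := by
    simp only [u, add_dotProduct, dotProduct_add, smul_dotProduct, dotProduct_smul, smul_eq_mul,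
      hvv, hxv, dotProduct_comm v x]
    ring
  have hcs := sq_dotProduct_le_dotProduct_self_mul_dotProduct_self u y
  rw [huy, huu, sq, mul_assoc] at hcs
  rcases (add_nonneg (sq_nonneg a) (sq_nonneg b)).eq_or_lt with h0 | h0
  · rw [← h0]
    exact (sq_nonneg _).trans (sq_dotProduct_le_dotProduct_self_mul_dotProduct_self x y)
  · exact le_of_mul_le_mul_left hcs h0

theorem dotProduct_mulVec_self_eq_zero {J : Matrix ι ι R} (hJ : Jᵀ = -J) (x : ι → R) :
    x ⬝ᵥ J *ᵥ x = 0 := by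
  have h : x ⬝ᵥ J *ᵥ x = -(x ⬝ᵥ J *ᵥ x) := by
    conv_lhs => rw [dotProduct_mulVec, ← mulVec_transpose, hJ, neg_mulVec, neg_dotProduct,
      dotProduct_comm]
  linarith

theorem sq_dotProduct_mulVec_le [DecidableEq ι] {J : Matrix ι ι R} (hskew : Jᵀ = -J)
    (horth : Jᵀ * J = 1) (x y : ι → R) :
    (x ⬝ᵥ J *ᵥ y) ^ 2 ≤ (x ⬝ᵥ x) * (y ⬝ᵥ y) - (x ⬝ᵥ y) ^ 2 := by
  have hxJy : x ⬝ᵥ J *ᵥ y = -(J *ᵥ x ⬝ᵥ y) := by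
    rw [dotProduct_mulVec, ← mulVec_transpose, hskew, neg_mulVec, neg_dotProduct]
  have hbessel := sq_dotProduct_add_sq_dotProduct_le (dotProduct_mulVec_self_eq_zero hskew x)
    (mulVec_dotProduct_mulVec_self horth x x) y
  rw [hxJy, neg_sq]
  linarith

end DotProduct

def symplPartner {m : ℕ} (i : Fin (2 * m)) : Fin (2 * m) :=
  ⟨if i.val % 2 = 0 then i.val + 1 else i.val - 1, by split_ifs <;> omega⟩

def symplSign {m : ℕ} (i : Fin (2 * m)) : ℝ :=
  if i.val % 2 = 0 then -1 else 1

theorem symplPartner_symplPartner {m : ℕ} (i : Fin (2 * m)) :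
    symplPartner (symplPartner i) = i := by
  ext; simp only [symplPartner]; split_ifs <;> omega

theorem symplSign_mul_symplSign_symplPartner {m : ℕ} (i : Fin (2 * m)) :
    symplSign i * symplSign (symplPartner i) = -1 := by
  simp only [symplSign, symplPartner]; split_ifs <;> first | omega | norm_num

theorem symplJ_apply {m : ℕ} (i k : Fin (2 * m)) :
    symplJ m i k = if k = symplPartner i then symplSign i else 0 := by
  simp only [symplJ, symplPartner, symplSign, of_apply, Fin.ext_iff]
  split_ifs <;> first | rfl | omega

theorem symplJ_transpose (m : ℕ) : (symplJ m)ᵀ = -symplJ m := by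
  ext i j
  simp only [transpose_apply, Matrix.neg_apply, symplJ, of_apply]
  split_ifs <;> first | omega | norm_num

theorem symplJ_mul_self (m : ℕ) : symplJ m * symplJ m = -1 := by
  ext i j
  simp only [mul_apply, symplJ_apply i, ite_mul, zero_mul, Finset.sum_ite_eq', Finset.mem_univ,
    if_true]
  rw [symplJ_apply, symplPartner_symplPartner, mul_ite, mul_zero,
    symplSign_mul_symplSign_symplPartner, Matrix.neg_apply, one_apply]
  rcases eq_or_ne j i with rfl | hji
  · simp
  · simp [hji, hji.symm]

theorem symplJ_transpose_mul_self (m : ℕ) : (symplJ m)ᵀ * symplJ m = 1 := by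
  rw [symplJ_transpose, neg_mul, symplJ_mul_self, neg_neg]

/-- **Wirtinger's inequality, case `k = 1`.**  For all `x, y ∈ ℝ^{2n}`, the
symplectic area `|ω(x,y)| = |xᵀ J_{2n} y|` is bounded by the Euclidean area
of the parallelogram spanned by `x` and `y`:
`(xᵀ J y)² ≤ ‖x‖²‖y‖² − ⟨x,y⟩²`. -/
theorem wirtinger_two_vectors (n : ℕ) (x y : Fin (2 * n) → ℝ) :
    (x ⬝ᵥ (symplJ n).mulVec y) ^ 2 ≤ (x ⬝ᵥ x) * (y ⬝ᵥ y) - (x ⬝ᵥ y) ^ 2 :=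
  sq_dotProduct_mulVec_le (symplJ_transpose n) (symplJ_transpose_mul_self n) x y
end

section
/- (Invariance of the integral invariant of Poincaré–Cartan, linear minor form.) Let n, k be positive integers with k ≤ n, let Φ be a symplectic 2n×2n real matrix (Φᵀ J_{2n} Φ = J_{2n}), and let L be any real 2n×2k matrix. For a subset S ⊆ {1,…,n} with |S| = k, let A_S denote the 2k×2k submatrix of a 2n-row matrix A consisting of the rows with indices {2i−1, 2i : i ∈ S} in increasing order. Then Σ_{|S|=k} det((Φ·L)_S) = Σ_{|S|=k} det(L_S); i.e., the sum of the signed 2k-volume projections onto the symplectic 2k-planes of the parallelepiped spanned by the columns of L is preserved under Φ. -/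
open Matrix

/-- For a `k`-element subset `S ⊆ {1,…,n}`, the increasing enumeration of the
row indices `{2i−1, 2i : i ∈ S}` (0-indexed: `{2i, 2i+1 : i ∈ S}`) of the
symplectic pairs of rows selected by `S`. -/
def symplRows {n : ℕ} (k : ℕ) (S : Finset (Fin n)) (hS : S.card = k) :
    Fin (2 * k) → Fin (2 * n) := fun a =>
  ⟨2 * (S.orderEmbOfFin hS ⟨a.val / 2, by omega⟩).val + a.val % 2, by
    have h := (S.orderEmbOfFin hS ⟨a.val / 2, by omega⟩).isLt
    omega⟩

/-- The sum over all `k`-element subsets `S ⊆ {1,…,n}` of the determinant of the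
`2k × 2k` submatrix `L_S` of `L` consisting of the symplectic pairs of rows
indexed by `S`; this is `(1/k!)·ω^k` evaluated on the columns of `L`, i.e. the
sum of the signed `2k`-volume projections of the parallelepiped spanned by the
columns of `L` onto the symplectic `2k`-planes. -/
noncomputable def symplMinorSum (n k : ℕ) (L : Matrix (Fin (2 * n)) (Fin (2 * k)) ℝ) : ℝ :=
  ∑ S : {S : Finset (Fin n) // S.card = k}, (L.submatrix (symplRows k S.1 S.2) id).det


/-!
Write `ω(x, y) = xᵀ J y`. The alternatization of `v ↦ ∏ᵢ ω(v₂ᵢ, v₂ᵢ₊₁)` (essentially `ω^k`) is a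
nonzero multiple of the minor sum as alternating `2k`-forms. To see this, evaluate both on distinct
standard basis vectors `e_j`: both vanish unless the rows `j` fill exactly `k` symplectic pairs `S`,
and after reordering `j` both are read off at the rows of `S`. The alternatization is invariant
under any `Φ` with `Φᵀ J Φ = J`, so the minor sum is too.
-/

theorem Function.Injective.exists_perm_comp_eq {ι α : Type*} [Finite ι] {f g : ι → α}
    (hf : Function.Injective f) (h : Set.range f ⊆ Set.range g) :
    ∃ τ : Equiv.Perm ι, g ∘ τ = f := by
  choose τ hτ using Set.range_subset_iff.mp h
  have hτ_inj : Function.Injective τ := fun a b hab => hf (by rw [← hτ a, ← hτ b, hab])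
  exact ⟨Equiv.ofBijective τ (Finite.injective_iff_bijective.mp hτ_inj), funext hτ⟩

theorem Matrix.det_one_submatrix_eq_zero {ι ι' R : Type*} [Fintype ι'] [DecidableEq ι']
    [DecidableEq ι] [CommRing R] {f g : ι' → ι} (b : ι') (hb : f b ∉ Set.range g) :
    ((1 : Matrix ι ι R).submatrix f g).det = 0 :=
  det_eq_zero_of_row_eq_zero b fun a => one_apply_ne fun h => hb ⟨a, h.symm⟩

section PairPerm

variable {ι κ : Type*}

theorem Function.Injective.injective_fst_of_pairs {w : ι × Fin 2 → κ × Fin 2}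
    (hw : Function.Injective w) (h : ∀ i, (w (i, 0)).1 = (w (i, 1)).1) :
    Function.Injective fun i => (w (i, 0)).1 := by
  intro i i' he
  have h2 : (w (i, 0)).2 ≠ (w (i, 1)).2 := fun h2 => by
    simpa using hw (Prod.ext (h i) h2)
  obtain ⟨c, hc⟩ : ∃ c : Fin 2, (w (i, c)).2 = (w (i', 0)).2 := by
    have : ∀ a b d : Fin 2, a ≠ b → a = d ∨ b = d := by decide
    rcases this _ _ (w (i', 0)).2 h2 with hd | hd
    exacts [⟨0, hd⟩, ⟨1, hd⟩]
  have hfst : ∀ c : Fin 2, (w (i, c)).1 = (w (i, 0)).1 := by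
    intro c; fin_cases c; exacts [rfl, (h i).symm]
  exact (Prod.ext_iff.mp (hw (Prod.ext ((hfst c).trans he) hc))).1

theorem Equiv.Perm.exists_eq_prodCongrLeft_mul_prodCongrRight [Finite ι]
    {σ : Equiv.Perm (ι × Fin 2)} (h : ∀ i, (σ (i, 0)).1 = (σ (i, 1)).1) :
    ∃ (π : Equiv.Perm ι) (ε : ι → Equiv.Perm (Fin 2)),
      σ = Equiv.prodCongrLeft (fun _ => π) * Equiv.prodCongrRight ε := by
  have hfst : ∀ i c, (σ (i, c)).1 = (σ (i, 0)).1 := by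
    intro i c; fin_cases c; exacts [rfl, (h i).symm]
  have hε : ∀ i, Function.Injective fun c => (σ (i, c)).2 := fun i c c' hc =>
    (Prod.ext_iff.mp (σ.injective (Prod.ext ((hfst i c).trans (hfst i c').symm) hc))).2
  refine ⟨.ofBijective _ (Finite.injective_iff_bijective.mp (σ.injective.injective_fst_of_pairs h)),
    fun i => .ofBijective _ (Finite.injective_iff_bijective.mp (hε i)), ?_⟩
  ext ⟨i, c⟩ : 1
  exact Prod.ext (hfst i c) rfl

end PairPerm

def finPairEquiv (m : ℕ) : Fin m × Fin 2 ≃ Fin (2 * m) :=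
  finProdFinEquiv.trans (finCongr (Nat.mul_comm m 2))

@[simp]
theorem finPairEquiv_apply_val {m : ℕ} (p : Fin m × Fin 2) :
    (finPairEquiv m p : ℕ) = p.2 + 2 * p.1 := rfl

section PairProduct

variable {R M M' : Type*} [CommRing R] [AddCommMonoid M] [Module R M] [AddCommMonoid M']
  [Module R M'] (B : M →ₗ[R] M →ₗ[R] R)

theorem prod_pairs_update {ι : Type*} [Fintype ι] [DecidableEq ι] [DecidableEq (ι × Fin 2)]
    (v : ι × Fin 2 → M) (p : ι × Fin 2) (x : M) :
    ∏ i, B (Function.update v p x (i, 0)) (Function.update v p x (i, 1)) =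
      B (Function.update v p x (p.1, 0)) (Function.update v p x (p.1, 1)) *
        ∏ i ∈ {p.1}ᶜ, B (v (i, 0)) (v (i, 1)) := by
  rw [Fintype.prod_eq_mul_prod_compl p.1]
  congr 1
  refine Finset.prod_congr rfl fun i hi => ?_
  have hne : ∀ c : Fin 2, (i, c) ≠ p := fun c h => by simp [← h] at hi
  rw [Function.update_of_ne (hne 0), Function.update_of_ne (hne 1)]

def pairProd (ι : Type*) [Fintype ι] : MultilinearMap R (fun _ : ι × Fin 2 => M) R where
  toFun v := ∏ i, B (v (i, 0)) (v (i, 1))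
  map_update_add' v p x y := by
    classical
    simp only [prod_pairs_update, ← add_mul]
    obtain ⟨i, c⟩ := p
    fin_cases c <;> simp
  map_update_smul' v p r x := by
    classical
    simp only [prod_pairs_update, smul_eq_mul, ← mul_assoc]
    obtain ⟨i, c⟩ := p
    fin_cases c <;> simp

def pairAlt (k : ℕ) : M [⋀^Fin (2 * k)]→ₗ[R] R :=
  (MultilinearMap.alternatization (pairProd B (Fin k))).domDomCongr (finPairEquiv k)

theorem pairAlt_apply (k : ℕ) (v : Fin (2 * k) → M) :
    pairAlt B k v = ∑ σ : Equiv.Perm (Fin k × Fin 2), Equiv.Perm.sign σ •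
      ∏ i, B (v (finPairEquiv k (σ (i, 0)))) (v (finPairEquiv k (σ (i, 1)))) := by
  simp [pairAlt, MultilinearMap.alternatization_apply, pairProd]

theorem pairAlt_compLinearMap (k : ℕ) (f : M' →ₗ[R] M) :
    (pairAlt B k).compLinearMap f = pairAlt (B.compl₁₂ f f) k := by
  ext v
  simp [pairAlt_apply]

end PairProduct

section SymplecticPairs

variable {n k : ℕ}

theorem symplJ_finPairEquiv (m : ℕ) (p q : Fin m × Fin 2) :
    symplJ m (finPairEquiv m p) (finPairEquiv m q) =
      if p.1 = q.1 then !![0, -1; 1, 0] p.2 q.2 else 0 := by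
  obtain ⟨i, a⟩ := p
  obtain ⟨j, b⟩ := q
  simp only [symplJ, of_apply, finPairEquiv_apply_val, Fin.ext_iff]
  fin_cases a <;> fin_cases b <;> simp
  all_goals split_ifs <;> first | rfl | (exfalso; omega)

theorem fst_eq_of_symplJ_ne_zero {m : ℕ} {x y : Fin (2 * m)} (h : symplJ m x y ≠ 0) :
    ((finPairEquiv m).symm x).1 = ((finPairEquiv m).symm y).1 := by
  rw [← (finPairEquiv m).apply_symm_apply x, ← (finPairEquiv m).apply_symm_apply y,
    symplJ_finPairEquiv] at h
  by_contra hne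
  exact h (if_neg hne)

theorem symplRows_finPairEquiv (S : Finset (Fin n)) (hS : S.card = k) (p : Fin k × Fin 2) :
    symplRows k S hS (finPairEquiv k p) = finPairEquiv n (S.orderEmbOfFin hS p.1, p.2) := by
  have hp : ∀ h, (⟨(p.2 + 2 * p.1 : ℕ) / 2, h⟩ : Fin k) = p.1 :=
    fun _ => Fin.ext (by dsimp only; omega)
  ext
  simp only [symplRows, finPairEquiv_apply_val, hp]
  omega

theorem symplRows_injective (S : Finset (Fin n)) (hS : S.card = k) :
    Function.Injective (symplRows k S hS) := by
  intro x y h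
  obtain ⟨p, rfl⟩ := (finPairEquiv k).surjective x
  obtain ⟨q, rfl⟩ := (finPairEquiv k).surjective y
  simp only [symplRows_finPairEquiv, (finPairEquiv n).injective.eq_iff, Prod.mk.injEq,
    (S.orderEmbOfFin hS).injective.eq_iff] at h
  exact congrArg _ (Prod.ext h.1 h.2)

theorem symplJ_symplRows (S : Finset (Fin n)) (hS : S.card = k) (x y : Fin (2 * k)) :
    symplJ n (symplRows k S hS x) (symplRows k S hS y) = symplJ k x y := by
  obtain ⟨p, rfl⟩ := (finPairEquiv k).surjective x
  obtain ⟨q, rfl⟩ := (finPairEquiv k).surjective y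
  simp only [symplRows_finPairEquiv, symplJ_finPairEquiv, (S.orderEmbOfFin hS).injective.eq_iff]

theorem mem_range_symplRows (S : Finset (Fin n)) (hS : S.card = k) (x : Fin (2 * n)) :
    x ∈ Set.range (symplRows k S hS) ↔ ((finPairEquiv n).symm x).1 ∈ S := by
  obtain ⟨⟨i, a⟩, rfl⟩ := (finPairEquiv n).surjective x
  rw [Equiv.symm_apply_apply, ← Finset.mem_coe, ← S.range_orderEmbOfFin hS]
  constructor
  · rintro ⟨y, hy⟩
    obtain ⟨⟨m, b⟩, rfl⟩ := (finPairEquiv k).surjective y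
    rw [symplRows_finPairEquiv, (finPairEquiv n).injective.eq_iff, Prod.mk.injEq] at hy
    exact ⟨m, hy.1⟩
  · rintro ⟨m, hm⟩
    exact ⟨finPairEquiv k (m, a), by rw [symplRows_finPairEquiv, hm]⟩

theorem range_symplRows_subset_iff {S T : Finset (Fin n)} (hS : S.card = k) (hT : T.card = k) :
    Set.range (symplRows k S hS) ⊆ Set.range (symplRows k T hT) ↔ S ⊆ T := by
  constructor
  · intro h i hi
    have := h ((mem_range_symplRows S hS (finPairEquiv n (i, 0))).mpr (by simpa using hi))
    simpa using (mem_range_symplRows T hT _).mp this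
  · intro h x hx
    rw [mem_range_symplRows] at hx ⊢
    exact h hx

end SymplecticPairs

noncomputable def symplAlt (n k : ℕ) : (Fin (2 * n) → ℝ) [⋀^Fin (2 * k)]→ₗ[ℝ] ℝ :=
  pairAlt (symplJ n).toBilin' k

noncomputable def symplConst (k : ℕ) : ℝ := symplAlt k k fun a => Pi.single a 1

noncomputable def symplMinorAlt (n k : ℕ) : (Fin (2 * n) → ℝ) [⋀^Fin (2 * k)]→ₗ[ℝ] ℝ :=
  ∑ S : {S : Finset (Fin n) // S.card = k},
    detRowAlternating.compLinearMap (LinearMap.funLeft ℝ ℝ (symplRows k S.1 S.2))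

section SymplecticForms

variable {n k : ℕ}

theorem symplAlt_mulVec {m : ℕ} (k : ℕ) {P : Matrix (Fin (2 * n)) (Fin (2 * m)) ℝ}
    (hP : Pᵀ * symplJ n * P = symplJ m) (v : Fin (2 * k) → Fin (2 * m) → ℝ) :
    symplAlt n k (fun b => P *ᵥ v b) = symplAlt m k v := by
  rw [symplAlt, symplAlt, ← hP, ← toBilin'_comp, LinearMap.BilinForm.comp,
    ← pairAlt_compLinearMap]
  rfl

theorem symplAlt_single (j : Fin (2 * k) → Fin (2 * n)) :
    symplAlt n k (fun a => Pi.single (j a) 1) = ∑ σ : Equiv.Perm (Fin k × Fin 2),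
      Equiv.Perm.sign σ • ∏ i, symplJ n (j (finPairEquiv k (σ (i, 0))))
        (j (finPairEquiv k (σ (i, 1)))) := by
  simp only [symplAlt, pairAlt_apply, toBilin'_single]

theorem symplAlt_symplRows (S : Finset (Fin n)) (hS : S.card = k) :
    symplAlt n k (fun a => Pi.single (symplRows k S hS a) 1) = symplConst k := by
  simp only [symplConst, symplAlt_single, symplJ_symplRows]

theorem sign_mul_J₂_apply (e : Equiv.Perm (Fin 2)) :
    (Equiv.Perm.sign e : ℝ) * !![(0 : ℝ), -1; 1, 0] (e 0) (e 1) = -1 := by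
  rcases (by decide : ∀ e : Equiv.Perm (Fin 2), e = 1 ∨ e = Equiv.swap 0 1) e with rfl | rfl
  · simp
  · simp

/-- A permutation with nonzero term permutes the symplectic pairs among themselves (an even
permutation) and then swaps some pairs internally; each swap flips both the sign and the entry
of `J`, so every such term equals `(-1) ^ k`. -/
theorem sign_smul_prod_symplJ (σ : Equiv.Perm (Fin k × Fin 2)) :
    Equiv.Perm.sign σ • ∏ i, symplJ k (finPairEquiv k (σ (i, 0))) (finPairEquiv k (σ (i, 1))) =
      if ∀ i, (σ (i, 0)).1 = (σ (i, 1)).1 then (-1) ^ k else 0 := by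
  simp only [symplJ_finPairEquiv]
  split_ifs with h
  · obtain ⟨π, ε, rfl⟩ := Equiv.Perm.exists_eq_prodCongrLeft_mul_prodCongrRight h
    simp only [map_mul, Equiv.Perm.sign_prodCongrLeft, Equiv.Perm.sign_prodCongrRight,
      Fin.prod_univ_two, Int.units_mul_self, one_mul, Equiv.Perm.mul_apply,
      Equiv.prodCongrRight_apply, Equiv.prodCongrLeft_apply, if_true, Units.smul_def,
      zsmul_eq_mul, Units.coe_prod, Int.cast_prod, ← Finset.prod_mul_distrib, sign_mul_J₂_apply]
    simp
  · push Not at h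
    obtain ⟨i, hi⟩ := h
    rw [Finset.prod_eq_zero (Finset.mem_univ i) (if_neg hi), smul_zero]

theorem symplConst_ne_zero (k : ℕ) : symplConst k ≠ 0 := by
  have h := symplAlt_single (n := k) id
  simp only [id] at h
  simp only [symplConst, h, sign_smul_prod_symplJ, Finset.sum_ite, Finset.sum_const_zero, add_zero,
    Finset.sum_const, nsmul_eq_mul]
  exact mul_ne_zero (Nat.cast_ne_zero.mpr (Finset.card_ne_zero.mpr ⟨1, by simp⟩))
    (pow_ne_zero _ (by norm_num))

theorem symplAlt_single_eq_zero {j : Fin (2 * k) → Fin (2 * n)} (hj : Function.Injective j)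
    (h : ∀ S : {S : Finset (Fin n) // S.card = k}, ¬Set.range j ⊆ Set.range (symplRows k S.1 S.2)) :
    symplAlt n k (fun a => Pi.single (j a) 1) = 0 := by
  rw [symplAlt_single]
  refine Finset.sum_eq_zero fun σ _ => ?_
  by_contra hσ
  have hfac : ∀ i, symplJ n (j (finPairEquiv k (σ (i, 0)))) (j (finPairEquiv k (σ (i, 1)))) ≠ 0 :=
    fun i h0 => hσ (by rw [Finset.prod_eq_zero (Finset.mem_univ i) h0, smul_zero])
  set w := fun p => (finPairEquiv n).symm (j (finPairEquiv k (σ p)))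
  have hw : Function.Injective w :=
    (finPairEquiv n).symm.injective.comp (hj.comp ((finPairEquiv k).injective.comp σ.injective))
  have hpair : ∀ i, (w (i, 0)).1 = (w (i, 1)).1 := fun i => fst_eq_of_symplJ_ne_zero (hfac i)
  refine h ⟨Finset.univ.map ⟨_, hw.injective_fst_of_pairs hpair⟩, by simp⟩ ?_
  rintro _ ⟨b, rfl⟩
  obtain ⟨⟨i, c⟩, hic⟩ := (σ.trans (finPairEquiv k)).surjective b
  rw [mem_range_symplRows, ← hic]
  refine Finset.mem_map.mpr ⟨i, Finset.mem_univ _, ?_⟩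
  fin_cases c
  exacts [rfl, hpair i]

theorem symplMinorAlt_apply (v : Fin (2 * k) → Fin (2 * n) → ℝ) :
    symplMinorAlt n k v =
      ∑ S : {S : Finset (Fin n) // S.card = k}, (of fun b a => v b (symplRows k S.1 S.2 a)).det := by
  rw [symplMinorAlt, ← AlternatingMap.coe_multilinearMap,
    ← AlternatingMap.toMultilinearMapLM_apply (S := ℕ), map_sum, _root_.sum_apply]
  rfl

theorem symplMinorSum_eq_symplMinorAlt (L : Matrix (Fin (2 * n)) (Fin (2 * k)) ℝ) :
    symplMinorSum n k L = symplMinorAlt n k fun b r => L r b := by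
  rw [symplMinorSum, symplMinorAlt_apply]
  exact Finset.sum_congr rfl fun S _ => (det_transpose _).symm

theorem symplMinorAlt_single (j : Fin (2 * k) → Fin (2 * n)) :
    symplMinorAlt n k (fun b => Pi.single (j b) 1) = ∑ S : {S : Finset (Fin n) // S.card = k},
      ((1 : Matrix (Fin (2 * n)) (Fin (2 * n)) ℝ).submatrix j (symplRows k S.1 S.2)).det := by
  rw [symplMinorAlt_apply]
  refine Finset.sum_congr rfl fun S _ => congrArg det ?_
  ext b a
  simp [one_apply, Pi.single_apply, eq_comm]

theorem symplMinorAlt_single_eq_zero {j : Fin (2 * k) → Fin (2 * n)}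
    (h : ∀ S : {S : Finset (Fin n) // S.card = k}, ¬Set.range j ⊆ Set.range (symplRows k S.1 S.2)) :
    symplMinorAlt n k (fun b => Pi.single (j b) 1) = 0 := by
  rw [symplMinorAlt_single]
  refine Finset.sum_eq_zero fun S _ => ?_
  obtain ⟨b, hb⟩ := not_forall.mp (mt Set.range_subset_iff.mpr (h S))
  exact det_one_submatrix_eq_zero b hb

theorem symplMinorAlt_symplRows (S : Finset (Fin n)) (hS : S.card = k) :
    symplMinorAlt n k (fun b => Pi.single (symplRows k S hS b) 1) = 1 := by
  rw [symplMinorAlt_single, Finset.sum_eq_single_of_mem ⟨S, hS⟩ (Finset.mem_univ _)]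
  · rw [submatrix_one _ (symplRows_injective S hS), det_one]
  · intro T _ hT
    by_contra hdet
    have hsub : Set.range (symplRows k S hS) ⊆ Set.range (symplRows k T.1 T.2) :=
      Set.range_subset_iff.mpr fun b => by_contra fun hb => hdet (det_one_submatrix_eq_zero b hb)
    rw [range_symplRows_subset_iff] at hsub
    exact hT (Subtype.ext (Finset.eq_of_subset_of_card_le hsub (by rw [hS, T.2])).symm)

theorem symplAlt_eq_smul_symplMinorAlt (n k : ℕ) :
    symplAlt n k = symplConst k • symplMinorAlt n k := by
  refine (Pi.basisFun ℝ (Fin (2 * n))).ext_alternating fun j hj => ?_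
  simp only [Pi.basisFun_apply, AlternatingMap.smul_apply]
  by_cases h : ∃ S : {S : Finset (Fin n) // S.card = k},
      Set.range j ⊆ Set.range (symplRows k S.1 S.2)
  · obtain ⟨⟨S, hS⟩, hsub⟩ := h
    obtain ⟨τ, rfl⟩ := hj.exists_perm_comp_eq hsub
    change symplAlt n k ((fun a => Pi.single (symplRows k S hS a) 1) ∘ τ) =
      symplConst k • symplMinorAlt n k ((fun a => Pi.single (symplRows k S hS a) 1) ∘ τ)
    rw [AlternatingMap.map_perm, AlternatingMap.map_perm, symplAlt_symplRows,
      symplMinorAlt_symplRows, smul_comm, smul_eq_mul, mul_one]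
  · push Not at h
    rw [symplAlt_single_eq_zero hj h, symplMinorAlt_single_eq_zero h, smul_zero]

theorem symplMinorAlt_mulVec {Φ : Matrix (Fin (2 * n)) (Fin (2 * n)) ℝ}
    (hΦ : Φᵀ * symplJ n * Φ = symplJ n) (v : Fin (2 * k) → Fin (2 * n) → ℝ) :
    symplMinorAlt n k (fun b => Φ *ᵥ v b) = symplMinorAlt n k v := by
  have h := symplAlt_mulVec k hΦ v
  rw [symplAlt_eq_smul_symplMinorAlt, AlternatingMap.smul_apply, AlternatingMap.smul_apply] at h
  exact smul_right_injective ℝ (symplConst_ne_zero k) h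

end SymplecticForms

theorem symplMinorSum_invariant_general (n k : ℕ)
    (Φ : Matrix (Fin (2 * n)) (Fin (2 * n)) ℝ)
    (hΦ : Φᵀ * symplJ n * Φ = symplJ n)
    (L : Matrix (Fin (2 * n)) (Fin (2 * k)) ℝ) :
    symplMinorSum n k (Φ * L) = symplMinorSum n k L := by
  rw [symplMinorSum_eq_symplMinorAlt, symplMinorSum_eq_symplMinorAlt,
    ← symplMinorAlt_mulVec hΦ (fun b r => L r b)]
  rfl

/-- **Invariance of the integral invariant of Poincaré–Cartan (linear minor
form).**  For a symplectic `2n × 2n` matrix `Φ` and any real `2n × 2k` matrix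
`L` (`0 < k ≤ n`), the sum of the signed `2k`-volume projections onto the
symplectic `2k`-planes of the parallelepiped spanned by the columns of `L` is
preserved under `Φ`. -/
theorem symplMinorSum_invariant (n k : ℕ) (hk : 0 < k) (hkn : k ≤ n)
    (Φ : Matrix (Fin (2 * n)) (Fin (2 * n)) ℝ)
    (hΦ : Φᵀ * symplJ n * Φ = symplJ n)
    (L : Matrix (Fin (2 * n)) (Fin (2 * k)) ℝ) :
    symplMinorSum n k (Φ * L) = symplMinorSum n k L :=
  symplMinorSum_invariant_general n k Φ hΦ L
end
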